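/- Let α = 1/2 and β = 0. For t > 0 set R(t) := I₀′(t/4)/I₀(t/4) (a well-defined real number since I₀(x) ≥ 1 > 0 for real x), and with s = −it define u₁(t) := (s/16)·(i + R(t))², u₂(t) := −(s/16)·(i − R(t))², v₁(t) := (i − R(t))/(i + R(t)), v₂(t) := (i + R(t))/(i − R(t)) (well-defined since i ± R(t) ≠ 0). Then (u₁, v₁, u₂, v₂) is a solution of the coupled Painlevé V system with parameters (1/2, 0) on the negative imaginary ray, i.e. the system holds at s = −it for all t > 0 with d/ds interpreted as i·d/dt, and its Hamiltonian satisfies H = s/16 + (i/4)·R(t) at s = −it, that is, H(t) = −it/16 + (i/4)·I₀′(t/4)/I₀(t/4) for all t > 0. -/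

import Mathlib

open Complex Filter Topology MeasureTheory

/-- Right-hand side of the `u₁`-equation of the coupled Painlevé V system in
dimension four: `s·u₁′ = (s/2)u₁ − u₁²(v₁−1)(3v₁−1) − u₁u₂(v₂−1)(2v₁+v₂−1)
+ 2(α+β)u₁v₁ − 2βu₁`. -/
noncomputable def cpvRHSu₁ (α β s u₁ u₂ v₁ v₂ : ℂ) : ℂ :=
  (s / 2) * u₁ - u₁ ^ 2 * (v₁ - 1) * (3 * v₁ - 1)
    - u₁ * u₂ * (v₂ - 1) * (2 * v₁ + v₂ - 1) + 2 * (α + β) * u₁ * v₁ - 2 * β * u₁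

/-- Right-hand side of the `u₂`-equation of the coupled Painlevé V system. -/
noncomputable def cpvRHSu₂ (α β s u₁ u₂ v₁ v₂ : ℂ) : ℂ :=
  -(s / 2) * u₂ - u₂ ^ 2 * (v₂ - 1) * (3 * v₂ - 1)
    - u₁ * u₂ * (v₁ - 1) * (v₁ + 2 * v₂ - 1) + 2 * (α + β) * u₂ * v₂ - 2 * β * u₂

/-- Right-hand side of the `v₁`-equation of the coupled Painlevé V system. -/
noncomputable def cpvRHSv₁ (α β s u₁ u₂ v₁ v₂ : ℂ) : ℂ :=
  -(s / 2) * v₁ + 2 * u₁ * v₁ * (v₁ - 1) ^ 2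
    + u₂ * (v₁ + v₂) * (v₁ - 1) * (v₂ - 1) - α * (v₁ ^ 2 - 1) - β * (v₁ - 1) ^ 2

/-- Right-hand side of the `v₂`-equation of the coupled Painlevé V system. -/
noncomputable def cpvRHSv₂ (α β s u₁ u₂ v₁ v₂ : ℂ) : ℂ :=
  (s / 2) * v₂ + 2 * u₂ * v₂ * (v₂ - 1) ^ 2
    + u₁ * (v₁ + v₂) * (v₁ - 1) * (v₂ - 1) - α * (v₂ ^ 2 - 1) - β * (v₂ - 1) ^ 2

/-- `s·H` for the coupled Painlevé V system: `s·H = u₁²v₁(v₁−1)² + u₂²v₂(v₂−1)²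
− (s/2)(u₁v₁ − u₂v₂) − α(u₁(v₁²−1) + u₂(v₂²−1)) − β(u₁(v₁−1)² + u₂(v₂−1)²)
+ u₁u₂(v₁+v₂)(v₁−1)(v₂−1)`. -/
noncomputable def cpvSH (α β s u₁ u₂ v₁ v₂ : ℂ) : ℂ :=
  u₁ ^ 2 * v₁ * (v₁ - 1) ^ 2 + u₂ ^ 2 * v₂ * (v₂ - 1) ^ 2
    - (s / 2) * (u₁ * v₁ - u₂ * v₂)
    - α * (u₁ * (v₁ ^ 2 - 1) + u₂ * (v₂ ^ 2 - 1))
    - β * (u₁ * (v₁ - 1) ^ 2 + u₂ * (v₂ - 1) ^ 2)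
    + u₁ * u₂ * (v₁ + v₂) * (v₁ - 1) * (v₂ - 1)

/-- The Hamiltonian `H` of the coupled Painlevé V system, defined by `s·H = cpvSH`. -/
noncomputable def cpvH (α β s u₁ u₂ v₁ v₂ : ℂ) : ℂ := cpvSH α β s u₁ u₂ v₁ v₂ / s

/-- `(u₁, u₂, v₁, v₂)` is a solution of the coupled Painlevé V system in dimension
four with parameters `(α, β)` on a set `I ⊆ ℝ` of (nonzero) real values of `s`. -/
def IsCPVSolutionOn (α β : ℂ) (I : Set ℝ) (u₁ u₂ v₁ v₂ : ℝ → ℂ) : Prop :=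
  ∀ s ∈ I,
    DifferentiableAt ℝ u₁ s ∧ DifferentiableAt ℝ u₂ s ∧
    DifferentiableAt ℝ v₁ s ∧ DifferentiableAt ℝ v₂ s ∧
    (s : ℂ) * deriv u₁ s = cpvRHSu₁ α β s (u₁ s) (u₂ s) (v₁ s) (v₂ s) ∧
    (s : ℂ) * deriv u₂ s = cpvRHSu₂ α β s (u₁ s) (u₂ s) (v₁ s) (v₂ s) ∧
    (s : ℂ) * deriv v₁ s = cpvRHSv₁ α β s (u₁ s) (u₂ s) (v₁ s) (v₂ s) ∧
    (s : ℂ) * deriv v₂ s = cpvRHSv₂ α β s (u₁ s) (u₂ s) (v₁ s) (v₂ s)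

/-- `(u₁, u₂, v₁, v₂)`, as functions of `t > 0`, form a solution of the coupled
Painlevé V system with parameters `(α, β)` on the negative imaginary ray
`s = −it`, `t > 0`, where `d/ds` is interpreted as `i·d/dt`. -/
def IsCPVSolutionNegIm (α β : ℂ) (u₁ u₂ v₁ v₂ : ℝ → ℂ) : Prop :=
  ∀ t : ℝ, 0 < t →
    DifferentiableAt ℝ u₁ t ∧ DifferentiableAt ℝ u₂ t ∧
    DifferentiableAt ℝ v₁ t ∧ DifferentiableAt ℝ v₂ t ∧
    (-Complex.I * t) * (Complex.I * deriv u₁ t)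
      = cpvRHSu₁ α β (-Complex.I * t) (u₁ t) (u₂ t) (v₁ t) (v₂ t) ∧
    (-Complex.I * t) * (Complex.I * deriv u₂ t)
      = cpvRHSu₂ α β (-Complex.I * t) (u₁ t) (u₂ t) (v₁ t) (v₂ t) ∧
    (-Complex.I * t) * (Complex.I * deriv v₁ t)
      = cpvRHSv₁ α β (-Complex.I * t) (u₁ t) (u₂ t) (v₁ t) (v₂ t) ∧
    (-Complex.I * t) * (Complex.I * deriv v₂ t)
      = cpvRHSv₂ α β (-Complex.I * t) (u₁ t) (u₂ t) (v₁ t) (v₂ t)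

/-- The modified Bessel function of order zero, `I₀(x) = Σ (x²/4)ⁿ/(n!)²`. -/
noncomputable def besselI0 (x : ℝ) : ℝ :=
  ∑' n : ℕ, (x ^ 2 / 4) ^ n / ((Nat.factorial n : ℝ)) ^ 2

/-- `R(t) = I₀′(t/4)/I₀(t/4)`. -/
noncomputable def besselR (t : ℝ) : ℝ := deriv besselI0 (t / 4) / besselI0 (t / 4)

/-- `u₁(t) = (s/16)(i + R(t))²` with `s = −it`. -/
noncomputable def besselu₁ (t : ℝ) : ℂ :=
  ((-Complex.I * t) / 16) * (Complex.I + (besselR t : ℂ)) ^ 2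

/-- `u₂(t) = −(s/16)(i − R(t))²` with `s = −it`. -/
noncomputable def besselu₂ (t : ℝ) : ℂ :=
  -((-Complex.I * t) / 16) * (Complex.I - (besselR t : ℂ)) ^ 2

/-- `v₁(t) = (i − R(t))/(i + R(t))`. -/
noncomputable def besselv₁ (t : ℝ) : ℂ :=
  (Complex.I - (besselR t : ℂ)) / (Complex.I + (besselR t : ℂ))

/-- `v₂(t) = (i + R(t))/(i − R(t))`. -/
noncomputable def besselv₂ (t : ℝ) : ℂ :=
  (Complex.I + (besselR t : ℂ)) / (Complex.I - (besselR t : ℂ))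

/-!
With `F_k(y) = ∑ yⁿ / (n! (n+k)!)` one has `I₀(x) = F₀(x²/4)`, `F_k' = F_{k+1}` and
`y F₂ + F₁ = F₀`; the last identity is Bessel's equation `I₀'' = I₀ − I₀'/x`. Hence
`R(t) = I₀'(t/4)/I₀(t/4)` solves the Riccati equation `R' = 1/4 − R/t − R²/4`. For any real
solution `R` of this Riccati equation, the ansatz `u₁ = (s/16)(i + R)²`,
`u₂ = −(s/16)(i − R)²`, `v₁ = (i − R)/(i + R)`, `v₂ = 1/v₁` turns every equation of the
system, and the formula for `H`, into a rational identity in `i, t, R, R'` that holds modulo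
`i² = −1` and the Riccati equation.
-/
open scoped Nat

section EntireSeries

variable {c : ℕ → ℝ}

theorem summable_mul_pow_of_abs_le_inv_factorial (hc : ∀ n, |c n| ≤ (n ! : ℝ)⁻¹)
    (y : ℝ) : Summable fun n => c n * y ^ n :=
  .of_norm_bounded (Real.summable_pow_div_factorial |y|) fun n => by
    rw [norm_mul, norm_pow, Real.norm_eq_abs, Real.norm_eq_abs, div_eq_inv_mul]
    gcongr
    exact hc n

theorem norm_mul_nat_mul_pow_pred_le (hc : ∀ n, |c n| ≤ (n ! : ℝ)⁻¹) {x R : ℝ}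
    (hx : |x| ≤ R) (hR : 1 ≤ R) (n : ℕ) :
    ‖c n * (n * x ^ (n - 1))‖ ≤ (2 * R) ^ n / n ! := by
  have hpow : |x| ^ (n - 1) ≤ R ^ n :=
    (pow_le_pow_left₀ (abs_nonneg x) hx _).trans (pow_le_pow_right₀ hR (Nat.sub_le n 1))
  have hn : (n : ℝ) ≤ 2 ^ n := by exact_mod_cast (Nat.lt_two_pow_self).le
  rw [Real.norm_eq_abs, abs_mul, abs_mul, abs_pow, Nat.abs_cast, mul_pow, div_eq_inv_mul]
  gcongr
  exact hc n

theorem hasDerivAt_tsum_mul_pow (hc : ∀ n, |c n| ≤ (n ! : ℝ)⁻¹) (y : ℝ) :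
    HasDerivAt (fun y => ∑' n, c n * y ^ n) (∑' n, (n + 1) * c (n + 1) * y ^ n) y := by
  have hR : 1 ≤ |y| + 1 := by linarith [abs_nonneg y]
  have hy : y ∈ Metric.ball (0 : ℝ) (|y| + 1) := by simp
  have hbound : ∀ n x, x ∈ Metric.ball (0 : ℝ) (|y| + 1) →
      ‖c n * (n * x ^ (n - 1))‖ ≤ (2 * (|y| + 1)) ^ n / n ! := fun n x hx =>
    norm_mul_nat_mul_pow_pred_le hc (by simpa using hx : |x| < |y| + 1).le hR n
  have hderiv := hasDerivAt_tsum_of_isPreconnected (Real.summable_pow_div_factorial _)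
    Metric.isOpen_ball (convex_ball 0 _).isPreconnected
    (fun n x _ => (hasDerivAt_pow n x).const_mul (c n)) hbound hy
    (summable_mul_pow_of_abs_le_inv_factorial hc y) hy
  have hsum : Summable fun n => c n * (n * y ^ (n - 1)) :=
    .of_norm_bounded (Real.summable_pow_div_factorial _) fun n => hbound n y hy
  refine hderiv.congr_deriv ?_
  rw [hsum.tsum_eq_zero_add]
  simp [mul_comm, mul_left_comm]

end EntireSeries

/-- `I_k(x) = (x/2)^k · besselISeries k (x²/4)`. -/
noncomputable def besselISeries (k : ℕ) (y : ℝ) : ℝ := ∑' n, (n ! * (n + k)! : ℝ)⁻¹ * y ^ n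

theorem abs_inv_factorial_mul_factorial_le (n k : ℕ) :
    |(n ! * (n + k)! : ℝ)⁻¹| ≤ (n ! : ℝ)⁻¹ := by
  have : (1 : ℝ) ≤ (n + k)! := by exact_mod_cast (n + k).factorial_pos
  rw [abs_of_pos (by positivity)]
  gcongr
  exact le_mul_of_one_le_right (by positivity) this

theorem hasDerivAt_besselISeries (k : ℕ) (y : ℝ) :
    HasDerivAt (besselISeries k) (besselISeries (k + 1) y) y := by
  refine (hasDerivAt_tsum_mul_pow (fun n => abs_inv_factorial_mul_factorial_le n k)
    y).congr_deriv ?_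
  refine tsum_congr fun n => ?_
  rw [show n + 1 + k = n + (k + 1) by ring, Nat.factorial_succ n]
  push_cast
  field_simp

theorem besselISeries_ode (y : ℝ) :
    y * besselISeries 2 y + besselISeries 1 y = besselISeries 0 y := by
  have hs (k : ℕ) : Summable fun n => (n ! * (n + k)! : ℝ)⁻¹ * y ^ n :=
    summable_mul_pow_of_abs_le_inv_factorial
      (fun n => abs_inv_factorial_mul_factorial_le n k) y
  have hcoeff (n : ℕ) : (n ! * (n + 2)! : ℝ)⁻¹ + ((n + 1)! * (n + 1 + 1)! : ℝ)⁻¹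
      = ((n + 1)! * (n + 1 + 0)! : ℝ)⁻¹ := by
    simp only [Nat.factorial_succ, add_zero]
    push_cast
    field_simp
  rw [besselISeries, besselISeries, besselISeries, (hs 1).tsum_eq_zero_add,
    (hs 0).tsum_eq_zero_add, ← tsum_mul_left, add_left_comm,
    ← ((hs 2).mul_left y).tsum_add ((summable_nat_add_iff 1).mpr (hs 1))]
  refine congrArg₂ (· + ·) (by simp) (tsum_congr fun n => ?_)
  rw [← hcoeff]
  ring

theorem one_le_besselISeries_zero {y : ℝ} (hy : 0 ≤ y) : 1 ≤ besselISeries 0 y := by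
  simpa [besselISeries] using (summable_mul_pow_of_abs_le_inv_factorial
    (fun n => abs_inv_factorial_mul_factorial_le n 0) y).le_tsum 0 fun n _ => by positivity

theorem besselI0_eq_besselISeries (x : ℝ) : besselI0 x = besselISeries 0 (x ^ 2 / 4) :=
  tsum_congr fun n => by simp [div_eq_inv_mul, sq]

theorem besselI0_pos (x : ℝ) : 0 < besselI0 x := by
  rw [besselI0_eq_besselISeries]
  exact one_pos.trans_le (one_le_besselISeries_zero (by positivity))

theorem hasDerivAt_sq_div_four (x : ℝ) : HasDerivAt (fun x : ℝ => x ^ 2 / 4) (x / 2) x := by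
  refine ((hasDerivAt_pow 2 x).div_const 4).congr_deriv ?_
  norm_num
  ring

theorem hasDerivAt_besselI0 (x : ℝ) :
    HasDerivAt besselI0 (x / 2 * besselISeries 1 (x ^ 2 / 4)) x := by
  rw [funext besselI0_eq_besselISeries]
  exact ((hasDerivAt_besselISeries 0 _).comp x (hasDerivAt_sq_div_four x)).congr_deriv
    (mul_comm _ _)

theorem deriv_besselI0 : deriv besselI0 = fun x => x / 2 * besselISeries 1 (x ^ 2 / 4) :=
  funext fun x => (hasDerivAt_besselI0 x).deriv

theorem hasDerivAt_deriv_besselI0 {x : ℝ} (hx : x ≠ 0) :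
    HasDerivAt (deriv besselI0) (besselI0 x - deriv besselI0 x / x) x := by
  rw [deriv_besselI0, besselI0_eq_besselISeries, ← besselISeries_ode (x ^ 2 / 4)]
  refine (((hasDerivAt_id' x).div_const 2).mul
    ((hasDerivAt_besselISeries 1 _).comp x (hasDerivAt_sq_div_four x))).congr_deriv ?_
  simp only [Function.comp_apply, Nat.reduceAdd]
  field_simp
  ring

theorem hasDerivAt_besselR {t : ℝ} (ht : t ≠ 0) :
    HasDerivAt besselR (1 / 4 - besselR t / t - besselR t ^ 2 / 4) t := by
  have hx : t / 4 ≠ 0 := div_ne_zero ht four_ne_zero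
  have hI₀ := (besselI0_pos (t / 4)).ne'
  have hlog := ((hasDerivAt_deriv_besselI0 hx).div
    (hasDerivAt_besselI0 (t / 4)).differentiableAt.hasDerivAt hI₀).comp t
    ((hasDerivAt_id' t).div_const 4)
  refine hlog.congr_deriv ?_
  rw [besselR]
  field_simp

-- `ρ` plays the role of `R'` (so `hρ` is the Riccati equation), and the left-hand sides are
-- `s · i · d/dt` applied to the ansatz.
theorem cpvRHSu₁_ansatz {x τ ρ : ℂ} (hτ : τ ≠ 0) (hadd : I + x ≠ 0) (hsub : I - x ≠ 0)
    (hρ : τ * ρ = τ / 4 - x - τ * x ^ 2 / 4) :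
    -I * τ * (I * (-I / 16 * (I + x) * (I + x + 2 * τ * ρ)))
      = cpvRHSu₁ (1/2) 0 (-I * τ) (-I * τ / 16 * (I + x) ^ 2) (-(-I * τ / 16) * (I - x) ^ 2)
        ((I - x) / (I + x)) ((I + x) / (I - x)) := by
  rw [cpvRHSu₁]
  field_simp
  linear_combination (32 * I - 32 * x - 16 * I * τ * x) * I_sq + 64 * I ^ 2 * hρ

theorem cpvRHSu₂_ansatz {x τ ρ : ℂ} (hτ : τ ≠ 0) (hadd : I + x ≠ 0) (hsub : I - x ≠ 0)
    (hρ : τ * ρ = τ / 4 - x - τ * x ^ 2 / 4) :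
    -I * τ * (I * (I / 16 * (I - x) * (I - x - 2 * τ * ρ)))
      = cpvRHSu₂ (1/2) 0 (-I * τ) (-I * τ / 16 * (I + x) ^ 2) (-(-I * τ / 16) * (I - x) ^ 2)
        ((I - x) / (I + x)) ((I + x) / (I - x)) := by
  rw [cpvRHSu₂]
  field_simp
  linear_combination (16 * I * τ * x - 32 * x - 32 * I) * I_sq + 64 * I ^ 2 * hρ

theorem cpvRHSv₁_ansatz {x τ ρ : ℂ} (hadd : I + x ≠ 0) (hsub : I - x ≠ 0)
    (hρ : τ * ρ = τ / 4 - x - τ * x ^ 2 / 4) :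
    -I * τ * (I * (-2 * I * ρ / (I + x) ^ 2))
      = cpvRHSv₁ (1/2) 0 (-I * τ) (-I * τ / 16 * (I + x) ^ 2) (-(-I * τ / 16) * (I - x) ^ 2)
        ((I - x) / (I + x)) ((I + x) / (I - x)) := by
  rw [cpvRHSv₁]
  field_simp
  linear_combination (16 * I * τ * x ^ 2 - 64 * I * x) * I_sq + 64 * I ^ 3 * hρ

theorem cpvRHSv₂_ansatz {x τ ρ : ℂ} (hadd : I + x ≠ 0) (hsub : I - x ≠ 0)
    (hρ : τ * ρ = τ / 4 - x - τ * x ^ 2 / 4) :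
    -I * τ * (I * (2 * I * ρ / (I - x) ^ 2))
      = cpvRHSv₂ (1/2) 0 (-I * τ) (-I * τ / 16 * (I + x) ^ 2) (-(-I * τ / 16) * (I - x) ^ 2)
        ((I - x) / (I + x)) ((I + x) / (I - x)) := by
  rw [cpvRHSv₂]
  field_simp
  linear_combination (64 * I * x - 16 * I * τ * x ^ 2) * I_sq - 64 * I ^ 3 * hρ

theorem cpvH_ansatz {x τ : ℂ} (hτ : τ ≠ 0) (hadd : I + x ≠ 0) (hsub : I - x ≠ 0) :
    cpvH (1/2) 0 (-I * τ) (-I * τ / 16 * (I + x) ^ 2) (-(-I * τ / 16) * (I - x) ^ 2)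
        ((I - x) / (I + x)) ((I + x) / (I - x))
      = -I * τ / 16 + I / 4 * x := by
  rw [cpvH, cpvSH]
  field_simp
  linear_combination 128 * I * τ * (1 - x ^ 2) * I_sq

theorem I_add_ofReal_ne_zero (x : ℝ) : I + x ≠ 0 := fun h => by
  simpa using congrArg im h

theorem I_sub_ofReal_ne_zero (x : ℝ) : I - x ≠ 0 := fun h => by
  simpa using congrArg im h

theorem isCPVSolutionNegIm_of_riccati {r : ℝ → ℝ}
    (hr : ∀ t, 0 < t → HasDerivAt r (1 / 4 - r t / t - r t ^ 2 / 4) t) :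
    IsCPVSolutionNegIm (1 / 2) 0 (fun t => -I * t / 16 * (I + r t) ^ 2)
      (fun t => -(-I * t / 16) * (I - r t) ^ 2) (fun t => (I - r t) / (I + r t))
      (fun t => (I + r t) / (I - r t)) := by
  intro t ht
  have hτ : (t : ℂ) ≠ 0 := ofReal_ne_zero.mpr ht.ne'
  set ρ : ℝ := 1 / 4 - r t / t - r t ^ 2 / 4 with hρdef
  have hρ : (t : ℂ) * ρ = t / 4 - r t - t * r t ^ 2 / 4 := by
    rw [hρdef]
    push_cast
    field_simp
  have hadd := I_add_ofReal_ne_zero (r t)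
  have hsub := I_sub_ofReal_ne_zero (r t)
  have hR := (hr t ht).ofReal_comp
  have hs : HasDerivAt (fun t : ℝ => -I * t / 16) (-I / 16) t := by
    simpa using ((hasDerivAt_id' t).ofReal_comp.const_mul (-I)).div_const 16
  have hu₁ := hs.fun_mul ((hR.const_add I).fun_pow 2)
  have hu₂ := hs.fun_neg.fun_mul ((hR.const_sub I).fun_pow 2)
  have hv₁ := (hR.const_sub I).fun_div (hR.const_add I) hadd
  have hv₂ := (hR.const_add I).fun_div (hR.const_sub I) hsub
  refine ⟨hu₁.differentiableAt, hu₂.differentiableAt, hv₁.differentiableAt,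
    hv₂.differentiableAt, ?_, ?_, ?_, ?_⟩
  · rw [hu₁.deriv]
    linear_combination cpvRHSu₁_ansatz hτ hadd hsub hρ
  · rw [hu₂.deriv]
    linear_combination cpvRHSu₂_ansatz hτ hadd hsub hρ
  · rw [hv₁.deriv]
    linear_combination cpvRHSv₁_ansatz hadd hsub hρ
  · rw [hv₂.deriv]
    linear_combination cpvRHSv₂_ansatz hadd hsub hρ

/-- The special function solution of the coupled Painlevé V system for
`α = 1/2`, `β = 0` on the ray `s = −it`, in terms of the modified Bessel
function `I₀`, together with the explicit Hamiltonian
`H(t) = −it/16 + (i/4)I₀′(t/4)/I₀(t/4)`. -/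
theorem cpv_special_bessel_solution :
    (∀ t : ℝ, 0 < t →
      0 < besselI0 (t / 4) ∧
      Complex.I + (besselR t : ℂ) ≠ 0 ∧
      Complex.I - (besselR t : ℂ) ≠ 0) ∧
    IsCPVSolutionNegIm (1/2) 0 besselu₁ besselu₂ besselv₁ besselv₂ ∧
    ∀ t : ℝ, 0 < t →
      cpvH (1/2) 0 (-Complex.I * t) (besselu₁ t) (besselu₂ t)
          (besselv₁ t) (besselv₂ t)
        = -Complex.I * t / 16 + (Complex.I / 4) * (besselR t : ℂ) :=
  ⟨fun _ _ => ⟨besselI0_pos _, I_add_ofReal_ne_zero _, I_sub_ofReal_ne_zero _⟩,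
    isCPVSolutionNegIm_of_riccati fun _ ht => hasDerivAt_besselR ht.ne',
    fun _ ht => cpvH_ansatz (ofReal_ne_zero.mpr ht.ne') (I_add_ofReal_ne_zero _)
      (I_sub_ofReal_ne_zero _)⟩
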